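/- There exists a set D₀ ⊆ ℝ consisting only of isolated points (hence a 0-dimensional C^∞-submanifold of ℝ) whose closure contains the classical Cantor set, and such that D₀ is not permeable in ℝ. Moreover, for d ≥ 2, the set D₀ × ℝ^{d−1} is a (d−1)-dimensional C^∞-submanifold of ℝ^d that is not permeable. -/

import Mathlib

open Set MeasureTheory ENNReal

section Defs

variable {M : Type*} [MetricSpace M]

/-- `γ` is a path in `E` from `x` to `y` parametrized on `[a,b]`. -/
def IsPathIn (E : Set M) (γ : ℝ → M) (a b : ℝ) (x y : M) : Prop :=
  a ≤ b ∧ ContinuousOn γ (Set.Icc a b) ∧ γ a = x ∧ γ b = y ∧ ∀ t ∈ Set.Icc a b, γ t ∈ E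

/-- Length of a path: total variation over `[a,b]`. -/
noncomputable def pathLength (γ : ℝ → M) (a b : ℝ) : ℝ≥0∞ := eVariationOn γ (Set.Icc a b)

/-- Intrinsic metric on `E`: infimum of lengths of finite-length paths in `E`. -/
noncomputable def intrinsicDist (E : Set M) (x y : M) : ℝ≥0∞ :=
  sInf { L | ∃ γ a b, IsPathIn E γ a b x y ∧ pathLength γ a b < ⊤ ∧ pathLength γ a b = L }

/-- `Θ`-intrinsic metric relative to ambient set `N`: only paths whose intersection with `Θ`
has countable closure (closure taken in the subspace `N`) are allowed. -/
noncomputable def thetaDistIn (N Θ : Set M) (x y : M) : ℝ≥0∞ :=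
  sInf { L | ∃ γ a b, IsPathIn N γ a b x y ∧ pathLength γ a b < ⊤ ∧
    (closure (γ '' Set.Icc a b ∩ Θ) ∩ N).Countable ∧ pathLength γ a b = L }

/-- `Θ`-finite intrinsic metric relative to ambient set `N`: only paths meeting `Θ` in finitely
many points are allowed. -/
noncomputable def thetaFinDistIn (N Θ : Set M) (x y : M) : ℝ≥0∞ :=
  sInf { L | ∃ γ a b, IsPathIn N γ a b x y ∧ pathLength γ a b < ⊤ ∧
    (γ '' Set.Icc a b ∩ Θ).Finite ∧ pathLength γ a b = L }

/-- `Θ` is permeable relative to `N`. -/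
def PermeableIn (N Θ : Set M) : Prop :=
  ∀ x ∈ N, ∀ y ∈ N, thetaDistIn N Θ x y = intrinsicDist N x y

/-- `Θ` is finitely permeable relative to `N`. -/
def FinitelyPermeableIn (N Θ : Set M) : Prop :=
  ∀ x ∈ N, ∀ y ∈ N, thetaFinDistIn N Θ x y = intrinsicDist N x y

/-- `Θ` is permeable (relative to the whole space). -/
def Permeable (Θ : Set M) : Prop := PermeableIn Set.univ Θ

/-- `Θ` is finitely permeable (relative to the whole space). -/
def FinitelyPermeable (Θ : Set M) : Prop := FinitelyPermeableIn Set.univ Θ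

end Defs

/-- The set `C₀` of finite triadic sums with digits in `{0, 2}`; the classical Cantor set is
its closure. -/
def cantorC0 : Set ℝ :=
  {x | ∃ (n : ℕ) (dg : ℕ → ℕ), (∀ k, dg k = 0 ∨ dg k = 2) ∧
    x = ∑ k ∈ Finset.range n, (dg k : ℝ) * (3 : ℝ)⁻¹ ^ (k + 1)}

/-!
Take for `D₀` the midpoints of the open intervals removed in the construction of the
Cantor set. The gap removed at stage `n` has radius `3⁻ⁿ⁻¹ / 2` around its midpoint and contains
no other midpoint, so `D₀` is discrete; every point of `C₀` is a limit of midpoints, and the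
closure of `C₀` is a nonempty perfect set, hence uncountable.

Let `π` be a continuous function (the identity of `ℝ`, or the first coordinate of `ℝᵈ`). A path
from `π = 0` to `π = 1` crosses every level `π = z` with `z ∈ D₀ ⊆ [0, 1]`; by compactness the
closure of its intersection with `π⁻¹ D₀` is mapped by `π` onto a closed set containing `D₀`,
hence containing the Cantor set, and so this closure is uncountable. Thus no admissible path
exists, whereas a segment has finite length.
-/

open Filter Topology

noncomputable def cantorSum (n : ℕ) (d : ℕ → ℕ) : ℝ :=
  ∑ k ∈ Finset.range n, (d k : ℝ) * (3 : ℝ)⁻¹ ^ (k + 1)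

def IsCantorDigits (d : ℕ → ℕ) : Prop := ∀ k, d k = 0 ∨ d k = 2

/-- The midpoint of the middle third removed from the stage-`n` interval
`[cantorSum n d, cantorSum n d + 3⁻¹ ^ n]`. -/
noncomputable def gapMidpoint (n : ℕ) (d : ℕ → ℕ) : ℝ := cantorSum n d + (3 : ℝ)⁻¹ ^ n / 2

def gapMidpoints : Set ℝ := {x | ∃ n d, IsCantorDigits d ∧ x = gapMidpoint n d}

lemma IsCantorDigits.cast_eq {d : ℕ → ℕ} (hd : IsCantorDigits d) (k : ℕ) :
    (d k : ℝ) = 0 ∨ (d k : ℝ) = 2 := by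
  rcases hd k with h | h <;> simp [h]

lemma IsCantorDigits.shift {d : ℕ → ℕ} (hd : IsCantorDigits d) :
    IsCantorDigits fun k => d (k + 1) :=
  fun k => hd (k + 1)

lemma cantorSum_succ_eq_shift (n : ℕ) (d : ℕ → ℕ) :
    cantorSum (n + 1) d = (d 0 + cantorSum n fun k => d (k + 1)) / 3 := by
  rw [cantorSum, cantorSum, Finset.sum_range_succ', add_comm, add_div, Finset.sum_div]
  congr 1
  · ring
  · exact Finset.sum_congr rfl fun k _ => by ring

lemma gapMidpoint_zero (d : ℕ → ℕ) : gapMidpoint 0 d = 1 / 2 := by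
  simp [gapMidpoint, cantorSum]

lemma gapMidpoint_succ_eq_shift (n : ℕ) (d : ℕ → ℕ) :
    gapMidpoint (n + 1) d = (d 0 + gapMidpoint n fun k => d (k + 1)) / 3 := by
  rw [gapMidpoint, gapMidpoint, cantorSum_succ_eq_shift, pow_succ]
  ring

lemma gapMidpoint_mem_Icc {d : ℕ → ℕ} (hd : IsCantorDigits d) (n : ℕ) :
    gapMidpoint n d ∈ Icc (0 : ℝ) 1 := by
  induction n generalizing d with
  | zero => rw [gapMidpoint_zero]; norm_num
  | succ n ih =>
    obtain ⟨h₀, h₁⟩ := ih hd.shift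
    rw [gapMidpoint_succ_eq_shift]
    rcases hd.cast_eq 0 with h | h <;> rw [h] <;> constructor <;> linarith

lemma gapMidpoints_subset_Icc : gapMidpoints ⊆ Icc 0 1 := by
  rintro _ ⟨n, d, hd, rfl⟩
  exact gapMidpoint_mem_Icc hd n

lemma le_abs_gapMidpoint_sub_gapMidpoint {n m : ℕ} (hnm : n ≤ m) {d d' : ℕ → ℕ}
    (hd : IsCantorDigits d) (hd' : IsCantorDigits d') (hne : gapMidpoint n d ≠ gapMidpoint m d') :
    (3 : ℝ)⁻¹ ^ (n + 1) / 2 ≤ |gapMidpoint n d - gapMidpoint m d'| := by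
  induction n generalizing m d d' with
  | zero =>
    obtain ⟨m, rfl⟩ : ∃ m', m = m' + 1 := by
      rcases m with _ | m
      · exact absurd (by rw [gapMidpoint_zero, gapMidpoint_zero]) hne
      · exact ⟨m, rfl⟩
    obtain ⟨h₀, h₁⟩ := gapMidpoint_mem_Icc hd'.shift m
    rw [gapMidpoint_zero, gapMidpoint_succ_eq_shift, zero_add, pow_one]
    rcases hd'.cast_eq 0 with h | h <;> rw [h]
    · rw [le_abs]; left; linarith
    · rw [le_abs]; right; linarith
  | succ n ih =>
    obtain ⟨m, rfl⟩ : ∃ m', m = m' + 1 := ⟨m - 1, by omega⟩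
    rw [gapMidpoint_succ_eq_shift, gapMidpoint_succ_eq_shift] at hne ⊢
    by_cases h0 : (d 0 : ℝ) = d' 0
    · -- both points lie in the same third, where the picture is a copy of the previous stage
      have hne' : (gapMidpoint n fun k => d (k + 1)) ≠ gapMidpoint m fun k => d' (k + 1) :=
        fun h => hne (by rw [h0, h])
      have := ih (by omega) hd.shift hd'.shift hne'
      rw [h0, ← sub_div, add_sub_add_left_eq_sub, abs_div, abs_of_pos (by norm_num : (0:ℝ) < 3),
        pow_succ _ (n + 1)]
      linarith
    · -- the points lie in the different thirds `[0, 1/3]` and `[2/3, 1]`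
      have hsmall : (3 : ℝ)⁻¹ ^ (n + 1 + 1) ≤ 3⁻¹ :=
        pow_le_of_le_one (by norm_num) (by norm_num) (by omega)
      obtain ⟨h₀, h₁⟩ := gapMidpoint_mem_Icc hd.shift n
      obtain ⟨h₀', h₁'⟩ := gapMidpoint_mem_Icc hd'.shift m
      rw [le_abs]
      rcases hd.cast_eq 0 with h | h <;> rcases hd'.cast_eq 0 with h' | h' <;>
        rw [h, h'] at h0 ⊢ <;> first | exact absurd rfl h0 | (left; linarith) | (right; linarith)

lemma exists_gapMidpoints_inter_ball_eq_singleton :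
    ∀ x ∈ gapMidpoints, ∃ ε > (0 : ℝ), gapMidpoints ∩ Metric.ball x ε = {x} := by
  rintro x ⟨n, d, hd, rfl⟩
  refine ⟨(3 : ℝ)⁻¹ ^ (n + 1) / 2, by positivity, ?_⟩
  refine subset_antisymm ?_
    (singleton_subset_iff.mpr ⟨⟨n, d, hd, rfl⟩, Metric.mem_ball_self (by positivity)⟩)
  rintro _ ⟨⟨m, d', hd', rfl⟩, hball⟩
  by_contra hne
  rw [Metric.mem_ball, Real.dist_eq] at hball
  rcases le_total n m with h | h
  · have := le_abs_gapMidpoint_sub_gapMidpoint h hd hd' (Ne.symm hne)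
    rw [abs_sub_comm] at this
    linarith
  · have := le_abs_gapMidpoint_sub_gapMidpoint h hd' hd hne
    have : (3 : ℝ)⁻¹ ^ (n + 1) ≤ (3 : ℝ)⁻¹ ^ (m + 1) :=
      pow_le_pow_of_le_one (by norm_num) (by norm_num) (by omega)
    linarith

lemma cantorSum_eq_of_le {n N : ℕ} {d : ℕ → ℕ} (hd : ∀ k, n ≤ k → d k = 0) (hN : n ≤ N) :
    cantorSum N d = cantorSum n d := by
  induction N, hN using Nat.le_induction with
  | base => rfl
  | succ N hnN ih => rw [cantorSum, Finset.sum_range_succ, hd N hnN, ← cantorSum, ih]; simp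

lemma cantorSum_succ_update (N : ℕ) (d : ℕ → ℕ) (δ : ℕ) :
    cantorSum (N + 1) (Function.update d N δ) = cantorSum N d + δ * (3 : ℝ)⁻¹ ^ (N + 1) := by
  rw [cantorSum, Finset.sum_range_succ, Function.update_self, cantorSum]
  congr 1
  exact Finset.sum_congr rfl fun k hk =>
    by rw [Function.update_of_ne (Finset.mem_range.mp hk).ne]

lemma exists_cantorSum_of_mem_cantorC0 {x : ℝ} (hx : x ∈ cantorC0) :
    ∃ n d, IsCantorDigits d ∧ (∀ k, n ≤ k → d k = 0) ∧ x = cantorSum n d := by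
  obtain ⟨n, d, hd, rfl⟩ := hx
  refine ⟨n, fun k => if k < n then d k else 0, fun k => ?_, fun k hk => if_neg (by omega), ?_⟩
  · dsimp only
    split_ifs
    exacts [hd k, Or.inl rfl]
  · exact Finset.sum_congr rfl fun k hk => by simp [Finset.mem_range.mp hk]

lemma tendsto_add_mul_inv_three_pow (x c : ℝ) :
    Tendsto (fun N : ℕ => x + c * (3 : ℝ)⁻¹ ^ N) atTop (𝓝 x) := by
  simpa using tendsto_const_nhds.add
    ((tendsto_pow_atTop_nhds_zero_of_lt_one (by norm_num) (by norm_num : (3 : ℝ)⁻¹ < 1)).const_mul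
      c)

lemma cantorC0_subset_closure_gapMidpoints : cantorC0 ⊆ closure gapMidpoints := by
  intro x hx
  obtain ⟨n, d, hd, hzero, rfl⟩ := exists_cantorSum_of_mem_cantorC0 hx
  refine mem_closure_of_tendsto (tendsto_add_mul_inv_three_pow _ (1 / 2)) ?_
  filter_upwards [eventually_ge_atTop n] with N hN
  refine ⟨N, d, hd, ?_⟩
  rw [gapMidpoint, cantorSum_eq_of_le hzero hN]
  ring

lemma closure_cantorC0_subset_closure_gapMidpoints : closure cantorC0 ⊆ closure gapMidpoints :=
  closure_minimal cantorC0_subset_closure_gapMidpoints isClosed_closure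

lemma preperfect_cantorC0 : Preperfect cantorC0 := by
  intro x hx
  obtain ⟨n, d, hd, hzero, rfl⟩ := exists_cantorSum_of_mem_cantorC0 hx
  rw [accPt_iff_frequently]
  refine (tendsto_add_mul_inv_three_pow _ (2 / 3)).frequently (Eventually.frequently ?_)
  filter_upwards [eventually_ge_atTop n] with N hN
  have hpos : (0 : ℝ) < (3 : ℝ)⁻¹ ^ N := by positivity
  refine ⟨by linarith, N + 1, Function.update d N 2, fun k => ?_, ?_⟩
  · rcases eq_or_ne k N with rfl | hk
    · simp
    · simpa [Function.update_of_ne hk] using hd k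
  · change _ = cantorSum (N + 1) _
    rw [cantorSum_succ_update, cantorSum_eq_of_le hzero hN, pow_succ]
    push_cast
    ring

lemma Perfect.not_countable {α : Type*} [MetricSpace α] [CompleteSpace α] {C : Set α}
    (hC : Perfect C) (hne : C.Nonempty) : ¬ C.Countable := by
  intro hcount
  obtain ⟨f, hfC, -, hf⟩ := hC.exists_nat_bool_injection hne
  have : (univ : Set (ℕ → Bool)).Countable :=
    countable_of_injective_of_countable_image hf.injOn (hcount.mono (by simpa using hfC))
  rw [countable_univ_iff, ← Cardinal.mk_le_aleph0_iff] at this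
  exact this.not_gt (by simpa using Cardinal.cantor Cardinal.aleph0)

lemma not_countable_closure_gapMidpoints : ¬ (closure gapMidpoints).Countable := by
  have hC : ¬ (closure cantorC0).Countable :=
    preperfect_cantorC0.perfect_closure.not_countable
      ⟨0, subset_closure ⟨0, fun _ => 0, fun _ => Or.inl rfl, by simp⟩⟩
  exact fun h => hC (h.mono closure_cantorC0_subset_closure_gapMidpoints)

lemma not_countable_closure_image_inter_preimage {X : Type*} [TopologicalSpace X] [T2Space X]
    {π : X → ℝ} (hπ : Continuous π) {D : Set ℝ} (hD : ¬ (closure D).Countable)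
    {γ : ℝ → X} {a b : ℝ} (hab : a ≤ b) (hγ : ContinuousOn γ (Icc a b))
    (hDγ : D ⊆ Icc (π (γ a)) (π (γ b))) :
    ¬ (closure (γ '' Icc a b ∩ π ⁻¹' D)).Countable := by
  set S := γ '' Icc a b ∩ π ⁻¹' D
  have hK : IsCompact (γ '' Icc a b) := isCompact_Icc.image_of_continuousOn hγ
  have hS : IsCompact (closure S) :=
    hK.of_isClosed_subset isClosed_closure (closure_minimal inter_subset_left hK.isClosed)
  have hDS : D ⊆ π '' closure S := fun z hz => by
    obtain ⟨t, ht, rfl⟩ := intermediate_value_Icc hab (hπ.comp_continuousOn hγ) (hDγ hz)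
    exact ⟨γ t, subset_closure ⟨mem_image_of_mem γ ht, hz⟩, rfl⟩
  have hclD : closure D ⊆ π '' closure S := closure_minimal hDS (hS.image hπ).isClosed
  exact fun h => hD ((h.image π).mono hclD)

lemma thetaDistIn_univ_preimage_eq_top {X : Type*} [MetricSpace X] {π : X → ℝ}
    (hπ : Continuous π) {D : Set ℝ} (hD : ¬ (closure D).Countable) {x y : X}
    (hDxy : D ⊆ Icc (π x) (π y)) : thetaDistIn univ (π ⁻¹' D) x y = ⊤ := by
  refine sInf_eq_top.mpr ?_
  rintro L ⟨γ, a, b, ⟨hab, hγ, rfl, rfl, -⟩, -, hcount, -⟩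
  rw [inter_univ] at hcount
  exact absurd hcount (not_countable_closure_image_inter_preimage hπ hD hab hγ hDxy)

lemma intrinsicDist_univ_lt_top_of_lipschitzWith {X : Type*} [MetricSpace X] {γ : ℝ → X}
    {K : NNReal} (hγ : LipschitzWith K γ) {a b : ℝ} (hab : a ≤ b) :
    intrinsicDist univ (γ a) (γ b) < ⊤ := by
  have hlen : pathLength γ a b < ⊤ := by
    simpa [pathLength, BoundedVariationOn, lt_top_iff_ne_top] using
      hγ.locallyBoundedVariationOn univ a b (mem_univ a) (mem_univ b)
  refine (sInf_le ?_).trans_lt hlen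
  exact ⟨γ, a, b, ⟨hab, hγ.continuous.continuousOn, rfl, rfl, fun _ _ => mem_univ _⟩, hlen, rfl⟩

lemma intrinsicDist_univ_zero_lt_top {E : Type*} [NormedAddCommGroup E] [NormedSpace ℝ E]
    (v : E) : intrinsicDist univ (0 : E) v < ⊤ := by
  have hγ : LipschitzWith ‖v‖₊ fun t : ℝ => t • v :=
    (ContinuousLinearMap.smulRight (1 : ℝ →L[ℝ] ℝ) v).lipschitz.weaken (by simp)
  simpa only [zero_smul, one_smul] using
    intrinsicDist_univ_lt_top_of_lipschitzWith hγ zero_le_one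

lemma not_permeable_preimage {X : Type*} [MetricSpace X] {π : X → ℝ} (hπ : Continuous π)
    {D : Set ℝ} (hD : ¬ (closure D).Countable) {x y : X} (hDxy : D ⊆ Icc (π x) (π y))
    (hxy : intrinsicDist univ x y < ⊤) : ¬ Permeable (π ⁻¹' D) := fun hperm => by
  have := hperm x (mem_univ x) y (mem_univ y)
  rw [thetaDistIn_univ_preimage_eq_top hπ hD hDxy] at this
  exact hxy.ne this.symm

/-- There is a set `D₀ ⊆ ℝ` of isolated points whose closure contains the classical Cantor set
(the closure of `cantorC0`), such that `D₀` is not permeable in `ℝ`; moreover, for every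
`d ≥ 2` the cylinder `D₀ × ℝ^{d-1}` is not permeable in `ℝ^d`. -/
theorem stmt19 :
    ∃ D₀ : Set ℝ,
      (∀ x ∈ D₀, ∃ ε > (0 : ℝ), D₀ ∩ Metric.ball x ε = {x}) ∧
      closure cantorC0 ⊆ closure D₀ ∧
      ¬ Permeable D₀ ∧
      ∀ d : ℕ, ∀ _hd : 2 ≤ d,
        ¬ Permeable {p : EuclideanSpace ℝ (Fin d) | p ⟨0, by omega⟩ ∈ D₀} := by
  have hD := not_countable_closure_gapMidpoints
  refine ⟨gapMidpoints, exists_gapMidpoints_inter_ball_eq_singleton,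
    closure_cantorC0_subset_closure_gapMidpoints, ?_, fun d hd => ?_⟩
  · simpa only [preimage_id] using not_permeable_preimage continuous_id hD
      (x := 0) (y := 1) gapMidpoints_subset_Icc (intrinsicDist_univ_zero_lt_top 1)
  · set i : Fin d := ⟨0, by omega⟩
    exact not_permeable_preimage (EuclideanSpace.proj (𝕜 := ℝ) i).continuous hD
      (x := 0) (y := EuclideanSpace.single i 1) (by simpa using gapMidpoints_subset_Icc)
      (intrinsicDist_univ_zero_lt_top _)
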